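/- Fix positive integers L and S, let β ∈ (0,1) satisfy Lβ + Sβ² = 1, and let {ρⁿ} be the LS-sequence of partitions of [0,1), with left endpoints y₁ⁿ, …, y_{tₙ}ⁿ. Then for every continuous function f on [0,1], (1/tₙ) Σ_{j=1}^{tₙ} f(yⱼⁿ) converges to ∫₀¹ f(t) dt as n → ∞. -/

import Mathlib

open Filter

open Classical in
/-- The LS-sequence of partitions of `[0,1)`, encoded as the list of lengths of its
intervals, from left to right. -/
noncomputable def LSpart (L S : ℕ) (β : ℝ) : ℕ → List ℝ
  | 0 => [1]
  | n + 1 => (LSpart L S β n).flatMap (fun x =>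
      if x = β ^ n then
        List.replicate L (β ^ (n + 1)) ++ List.replicate S (β ^ (n + 2))
      else [x])

/-- Left endpoint of the `j`-th (0-indexed) interval of `ρⁿ`. -/
noncomputable def lep (L S : ℕ) (β : ℝ) (n j : ℕ) : ℝ := ((LSpart L S β n).take j).sum

open Classical in
noncomputable def LSstep (L S : ℕ) (β : ℝ) (n : ℕ) (x : ℝ) : List ℝ :=
  if x = β ^ n then List.replicate L (β ^ (n + 1)) ++ List.replicate S (β ^ (n + 2)) else [x]

lemma LSpart_succ (L S : ℕ) (β : ℝ) (n : ℕ) :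
    LSpart L S β (n+1) = (LSpart L S β n).flatMap (LSstep L S β n) := rfl

lemma pow_succ_lt (β : ℝ) (hβ0 : 0 < β) (hβ1 : β < 1) (n : ℕ) : β ^ (n+1) < β ^ n := by
  calc β ^ (n+1) = β ^ n * β := by ring
  _ < β ^ n * 1 := by nlinarith [pow_pos hβ0 n]
  _ = β ^ n := by ring

lemma mem_LSpart (L S : ℕ) (β : ℝ) (hβ0 : 0 < β) (hβ1 : β < 1) (n : ℕ) :
    ∀ x ∈ LSpart L S β n, x = β ^ n ∨ x = β ^ (n+1) := by
  induction n with
  | zero => intro x hx; simp [LSpart] at hx; left; simp [hx]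
  | succ n ih =>
    intro x hx
    rw [LSpart_succ, List.mem_flatMap] at hx
    obtain ⟨y, hy, hx⟩ := hx
    unfold LSstep at hx
    split_ifs at hx with h
    · rcases List.mem_append.1 hx with h' | h'
      · left; exact List.eq_of_mem_replicate h'
      · right; exact List.eq_of_mem_replicate h'
    · rcases ih y hy with h' | h'
      · exact absurd h' h
      · simp at hx; subst hx; left; exact h'


lemma sum_flatMap_eq {l : List ℝ} {g : ℝ → List ℝ} (h : ∀ x ∈ l, (g x).sum = x) :
    (l.flatMap g).sum = l.sum := by
  induction l with
  | nil => simp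
  | cons a l ih =>
    rw [List.flatMap_cons, List.sum_append, List.sum_cons, h a (by simp),
      ih (fun x hx => h x (by simp [hx]))]

lemma flatMap_eq_self {α : Type*} {l : List α} {g : α → List α} (h : ∀ x ∈ l, g x = [x]) :
    l.flatMap g = l := by
  induction l with
  | nil => simp
  | cons a l ih =>
    rw [List.flatMap_cons, h a (by simp), ih (fun x hx => h x (by simp [hx]))]
    simp

lemma pos_LSpart (L S : ℕ) (β : ℝ) (hβ0 : 0 < β) (hβ1 : β < 1) (n : ℕ) :
    ∀ x ∈ LSpart L S β n, 0 < x := by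
  intro x hx
  rcases mem_LSpart L S β hβ0 hβ1 n x hx with h | h <;> rw [h] <;> positivity

lemma LSstep_sum (L S : ℕ) (β : ℝ) (hβ0 : 0 < β)
    (hβ : (L : ℝ) * β + (S : ℝ) * β ^ 2 = 1) (n : ℕ) (x : ℝ) :
    (LSstep L S β n x).sum = x := by
  unfold LSstep
  split_ifs with h
  · rw [List.sum_append, List.sum_replicate, List.sum_replicate, h]
    simp only [nsmul_eq_mul]
    have h1 : β ^ (n+1) = β ^ n * β := by ring
    have h2 : β ^ (n+2) = β ^ n * β ^ 2 := by ring
    rw [h1, h2]; nlinarith [pow_pos hβ0 n]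
  · simp

lemma sum_LSpart (L S : ℕ) (β : ℝ) (hβ0 : 0 < β)
    (hβ : (L : ℝ) * β + (S : ℝ) * β ^ 2 = 1) (n : ℕ) :
    (LSpart L S β n).sum = 1 := by
  induction n with
  | zero => simp [LSpart]
  | succ n ih =>
    rw [LSpart_succ, sum_flatMap_eq (fun x _ => LSstep_sum L S β hβ0 hβ n x), ih]

lemma length_LSpart_pos (L S : ℕ) (hL : 0 < L) (β : ℝ) (n : ℕ) :
    0 < (LSpart L S β n).length := by
  induction n with
  | zero => simp [LSpart]
  | succ n ih =>
    rw [LSpart_succ]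
    rcases List.exists_mem_of_length_pos ih with ⟨x, hx⟩
    have : (LSstep L S β n x).length > 0 := by
      unfold LSstep; split_ifs <;> simp <;> omega
    calc 0 < (LSstep L S β n x).length := this
    _ ≤ ((LSpart L S β n).flatMap (LSstep L S β n)).length := by
        rw [List.length_flatMap]
        exact List.single_le_sum (fun _ _ => Nat.zero_le _) _
          (List.mem_map_of_mem hx)

open Classical in
/-- Blocks of the refinement of one interval of `ρᵐ` inside `ρⁿ`. -/
noncomputable def LSg (L S : ℕ) (β : ℝ) (m n : ℕ) (x : ℝ) : List ℝ :=
  if x = β ^ m then (LSpart L S β (n - m)).map (fun y => β ^ m * y)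
  else (LSpart L S β (n - m - 1)).map (fun y => β ^ (m+1) * y)

lemma step_scale (L S : ℕ) (β : ℝ) (hβ0 : 0 < β) (hβ1 : β < 1) (m p : ℕ) :
    ∀ y ∈ LSpart L S β p, LSstep L S β (m + p) (β ^ m * y) =
      (LSstep L S β p y).map (fun z => β ^ m * z) := by
  intro y hy
  have hinj : ∀ a b : ℝ, β ^ m * a = β ^ m * b → a = b := by
    intro a b h
    have := pow_pos hβ0 m
    exact mul_left_cancel₀ (ne_of_gt this) h
  rcases mem_LSpart L S β hβ0 hβ1 p y hy with h | h
  · subst h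
    have e1 : β ^ m * β ^ p = β ^ (m + p) := by rw [← pow_add]
    unfold LSstep
    rw [if_pos e1, if_pos rfl, List.map_append, List.map_replicate, List.map_replicate,
      ← pow_add, ← pow_add]
    ring_nf
  · subst h
    have hne : β ^ (p+1) ≠ β ^ p := ne_of_lt (pow_succ_lt β hβ0 hβ1 p)
    have e1 : β ^ m * β ^ (p+1) ≠ β ^ (m + p) := by
      rw [← pow_add, show m + (p+1) = (m+p)+1 from by ring]
      exact ne_of_lt (pow_succ_lt β hβ0 hβ1 (m+p))
    unfold LSstep
    rw [if_neg e1, if_neg hne]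
    simp

lemma selfSim (L S : ℕ) (β : ℝ) (hβ0 : 0 < β) (hβ1 : β < 1) (m p : ℕ) :
    LSpart L S β (m + p) = (LSpart L S β m).flatMap (LSg L S β m (m + p)) := by
  induction p with
  | zero =>
    symm
    apply flatMap_eq_self
    intro x hx
    unfold LSg
    split_ifs with h
    · simp [LSpart, h]
    · rcases mem_LSpart L S β hβ0 hβ1 m x hx with h' | h'
      · exact absurd h' h
      · simp [LSpart, h']
  | succ p ih =>
    have : m + (p + 1) = (m + p) + 1 := by ring
    rw [this, LSpart_succ, ih, List.flatMap_assoc]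
    apply List.flatMap_congr
    intro x hx
    have key : ∀ m' p', ((LSpart L S β p').map (fun y => β ^ m' * y)).flatMap
        (LSstep L S β (m' + p')) = (LSpart L S β (p'+1)).map (fun y => β ^ m' * y) := by
      intro m' p'
      rw [List.flatMap_map, LSpart_succ, List.map_flatMap]
      exact List.flatMap_congr (fun y hy => step_scale L S β hβ0 hβ1 m' p' y hy)
    unfold LSg
    split_ifs with h
    · have e1 : m + p - m = p := by omega
      have e2 : m + p + 1 - m = p + 1 := by omega
      rw [e1, e2, key m p]
    · have hx' : x = β ^ (m+1) := by
        rcases mem_LSpart L S β hβ0 hβ1 m x hx with h' | h'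
        · exact absurd h' h
        · exact h'
      have e2 : m + p + 1 - m - 1 = p := by omega
      rw [e2]
      cases p with
      | zero =>
        have e1 : m + 0 - m - 1 = 0 := by omega
        rw [e1]
        show ((LSpart L S β 0).map (fun y => β ^ (m+1) * y)).flatMap (LSstep L S β (m+0)) = _
        have : (LSpart L S β 0).map (fun y => β ^ (m+1) * y) = [β ^ (m+1)] := by
          simp [LSpart]
        rw [this]
        have hne : β ^ (m+1) ≠ β ^ (m+0) := by
          rw [show m + 0 = m from by omega]
          exact ne_of_lt (pow_succ_lt β hβ0 hβ1 m)
        simp only [List.flatMap_cons, List.flatMap_nil, List.append_nil]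
        unfold LSstep
        rw [if_neg hne]
      | succ q =>
        have e1 : m + (q+1) - m - 1 = q := by omega
        rw [e1, show m + (q+1) = (m+1) + q from by ring, key (m+1) q]

/-- Sum of `f` over left endpoints determined by a list of lengths, starting at `c`. -/
noncomputable def esum (f : ℝ → ℝ) : List ℝ → ℝ → ℝ
  | [], _ => 0
  | x :: xs, c => f c + esum f xs (c + x)

/-- Block-weighted sum. -/
noncomputable def wsum (f : ℝ → ℝ) (g : ℝ → List ℝ) : List ℝ → ℝ → ℝ
  | [], _ => 0
  | x :: xs, c => ((g x).length : ℝ) * f c + wsum f g xs (c + x)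

/-- Riemann sum. -/
noncomputable def rsum (f : ℝ → ℝ) : List ℝ → ℝ → ℝ
  | [], _ => 0
  | x :: xs, c => x * f c + rsum f xs (c + x)

open Classical in
/-- Sum of `f` over left endpoints of entries equal to `v`. -/
noncomputable def csumL (f : ℝ → ℝ) (v : ℝ) : List ℝ → ℝ → ℝ
  | [], _ => 0
  | x :: xs, c => (if x = v then f c else 0) + csumL f v xs (c + x)

open Classical in
/-- Sum of `f` over left endpoints of entries not equal to `v`. -/
noncomputable def csumS (f : ℝ → ℝ) (v : ℝ) : List ℝ → ℝ → ℝ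
  | [], _ => 0
  | x :: xs, c => (if x = v then 0 else f c) + csumS f v xs (c + x)

lemma esum_eq_sum (f : ℝ → ℝ) (l : List ℝ) (c : ℝ) :
    esum f l c = ∑ j : Fin l.length, f (c + (l.take j).sum) := by
  induction l generalizing c with
  | nil => simp [esum]
  | cons x xs ih =>
    rw [show (x :: xs).length = xs.length + 1 from rfl, Fin.sum_univ_succ]
    have h0 : f (c + (List.take (((0 : Fin (xs.length+1))) : ℕ) (x :: xs)).sum) = f c := by
      norm_num
    rw [h0]
    show f c + esum f xs (c + x) = _
    rw [ih (c + x)]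
    congr 1
    apply Finset.sum_congr rfl
    intro j _
    congr 1
    rw [show ((Fin.succ j) : ℕ) = (j : ℕ) + 1 from rfl, List.take_succ_cons]
    simp [List.sum_cons]
    ring

lemma esum_append (f : ℝ → ℝ) (l₁ l₂ : List ℝ) (c : ℝ) :
    esum f (l₁ ++ l₂) c = esum f l₁ c + esum f l₂ (c + l₁.sum) := by
  induction l₁ generalizing c with
  | nil => simp [esum]
  | cons x xs ih =>
    show f c + esum f (xs ++ l₂) (c + x) = (f c + esum f xs (c + x)) + esum f l₂ (c + (x :: xs).sum)
    rw [ih (c + x), List.sum_cons]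
    ring_nf

lemma block1 (f : ℝ → ℝ) (ε η : ℝ)
    (Hf : ∀ u v : ℝ, u ∈ Set.Icc (0:ℝ) 1 → v ∈ Set.Icc (0:ℝ) 1 → |u - v| ≤ η → |f u - f v| ≤ ε) :
    ∀ (gl : List ℝ) (c0 c : ℝ), 0 ≤ c0 → c0 ≤ c → c + gl.sum ≤ 1 → c + gl.sum ≤ c0 + η →
      (∀ y ∈ gl, 0 ≤ y) →
      |esum f gl c - gl.length * f c0| ≤ ε * gl.length := by
  intro gl
  induction gl with
  | nil => intro c0 c _ _ _ _ _; simp [esum]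
  | cons y ys ih =>
    intro c0 c h0 h1 h2 h3 h4
    have hy : 0 ≤ y := h4 y (by simp)
    have hys : 0 ≤ ys.sum := List.sum_nonneg (fun z hz => h4 z (by simp [hz]))
    have hsum : (y :: ys).sum = y + ys.sum := by simp
    have hc1 : c ≤ 1 := by rw [hsum] at h2; linarith
    have hstep : |f c - f c0| ≤ ε := by
      apply Hf c c0 ⟨by linarith, hc1⟩ ⟨h0, by linarith [hsum ▸ h2]⟩
      rw [abs_of_nonneg (by linarith)]
      rw [hsum] at h3; linarith
    have hrec := ih c0 (c + y) h0 (by linarith) (by rw [hsum] at h2; linarith)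
      (by rw [hsum] at h3; linarith) (fun z hz => h4 z (by simp [hz]))
    have hlen : ((y :: ys).length : ℝ) = (ys.length : ℝ) + 1 := by push_cast [List.length_cons]; ring
    calc |esum f (y :: ys) c - (y :: ys).length * f c0|
        = |(f c - f c0) + (esum f ys (c + y) - ys.length * f c0)| := by
          rw [show esum f (y :: ys) c = f c + esum f ys (c + y) from rfl, hlen]; ring_nf
      _ ≤ |f c - f c0| + |esum f ys (c + y) - ys.length * f c0| := abs_add_le _ _
      _ ≤ ε + ε * ys.length := add_le_add hstep hrec
      _ = ε * (y :: ys).length := by rw [hlen]; ring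

lemma blocks (f : ℝ → ℝ) (ε η : ℝ) (g : ℝ → List ℝ)
    (Hf : ∀ u v : ℝ, u ∈ Set.Icc (0:ℝ) 1 → v ∈ Set.Icc (0:ℝ) 1 → |u - v| ≤ η → |f u - f v| ≤ ε) :
    ∀ (l : List ℝ) (c : ℝ), 0 ≤ c → c + l.sum ≤ 1 →
      (∀ x ∈ l, 0 ≤ x ∧ x ≤ η ∧ (g x).sum = x ∧ (∀ y ∈ g x, 0 ≤ y)) →
      |esum f (l.flatMap g) c - wsum f g l c| ≤ ε * ((l.flatMap g).length) := by
  intro l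
  induction l with
  | nil => intro c _ _ _; simp [esum, wsum]
  | cons x xs ih =>
    intro c hc h1 h2
    obtain ⟨hx0, hxη, hgsum, hgpos⟩ := h2 x (by simp)
    have hxs : 0 ≤ xs.sum := List.sum_nonneg (fun z hz => (h2 z (by simp [hz])).1)
    have hsum : (x :: xs).sum = x + xs.sum := by simp
    rw [List.flatMap_cons, esum_append, hgsum]
    have hblock := block1 f ε η Hf (g x) c c hc le_rfl
      (by rw [hgsum]; rw [hsum] at h1; linarith) (by rw [hgsum]; linarith) hgpos
    have hrec := ih (c + x) (by linarith) (by rw [hsum] at h1; linarith)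
      (fun z hz => h2 z (by simp [hz]))
    have hlen : ((g x ++ xs.flatMap g).length : ℝ)
        = ((g x).length : ℝ) + ((xs.flatMap g).length : ℝ) := by
      rw [List.length_append]; push_cast; ring
    calc |esum f (g x) c + esum f (xs.flatMap g) (c + x) - wsum f g (x :: xs) c|
        = |(esum f (g x) c - (g x).length * f c)
            + (esum f (xs.flatMap g) (c + x) - wsum f g xs (c + x))| := by
          rw [show wsum f g (x :: xs) c = ((g x).length : ℝ) * f c + wsum f g xs (c + x) from rfl]
          ring_nf
      _ ≤ _ + _ := abs_add_le _ _
      _ ≤ ε * (g x).length + ε * ((xs.flatMap g).length) := add_le_add hblock hrec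
      _ = ε * ((g x ++ xs.flatMap g).length) := by rw [hlen]; ring

lemma wsum_split (L S : ℕ) (β : ℝ) (m n : ℕ) (f : ℝ → ℝ) :
    ∀ (l : List ℝ) (c : ℝ),
      wsum f (LSg L S β m n) l c =
        ((LSpart L S β (n-m)).length : ℝ) * csumL f (β^m) l c
        + ((LSpart L S β (n-m-1)).length : ℝ) * csumS f (β^m) l c := by
  intro l
  induction l with
  | nil => intro c; simp [wsum, csumL, csumS]
  | cons x xs ih =>
    intro c
    show ((LSg L S β m n x).length : ℝ) * f c + wsum f (LSg L S β m n) xs (c + x) = _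
    rw [ih (c + x)]
    show _ = ((LSpart L S β (n-m)).length : ℝ) * ((if x = β^m then f c else 0) + csumL f (β^m) xs (c+x))
        + ((LSpart L S β (n-m-1)).length : ℝ) * ((if x = β^m then 0 else f c) + csumS f (β^m) xs (c+x))
    unfold LSg
    split_ifs with h
    · rw [List.length_map]; ring
    · rw [List.length_map]; ring

lemma rsum_split (L S : ℕ) (β : ℝ) (hβ0 : 0 < β) (hβ1 : β < 1) (m : ℕ) (f : ℝ → ℝ) :
    ∀ (l : List ℝ) (c : ℝ), (∀ x ∈ l, x = β^m ∨ x = β^(m+1)) →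
      rsum f l c = β^m * csumL f (β^m) l c + β^(m+1) * csumS f (β^m) l c := by
  intro l
  induction l with
  | nil => intro c _; simp [rsum, csumL, csumS]
  | cons x xs ih =>
    intro c hmem
    show x * f c + rsum f xs (c + x) = _
    rw [ih (c + x) (fun z hz => hmem z (by simp [hz]))]
    show _ = β^m * ((if x = β^m then f c else 0) + csumL f (β^m) xs (c+x))
        + β^(m+1) * ((if x = β^m then 0 else f c) + csumS f (β^m) xs (c+x))
    split_ifs with h
    · rw [h]; ring
    · rcases hmem x (by simp) with h' | h'
      · exact absurd h' h
      · rw [h']; ring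

lemma rsum_integral (f : ℝ → ℝ) (ε η : ℝ) (hf : ContinuousOn f (Set.Icc 0 1))
    (Hf : ∀ u v : ℝ, u ∈ Set.Icc (0:ℝ) 1 → v ∈ Set.Icc (0:ℝ) 1 → |u - v| ≤ η → |f u - f v| ≤ ε) :
    ∀ (l : List ℝ) (c : ℝ), 0 ≤ c → c + l.sum ≤ 1 → (∀ x ∈ l, 0 ≤ x ∧ x ≤ η) →
      |rsum f l c - ∫ x in c..(c + l.sum), f x| ≤ ε * l.sum := by
  intro l
  induction l with
  | nil => intro c _ _ _; simp [rsum]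
  | cons x xs ih =>
    intro c hc h1 h2
    obtain ⟨hx0, hxη⟩ := h2 x (by simp)
    have hxs : 0 ≤ xs.sum := List.sum_nonneg (fun z hz => (h2 z (by simp [hz])).1)
    have hsum : (x :: xs).sum = x + xs.sum := by simp
    rw [hsum] at h1 ⊢
    have hint : ∀ a b : ℝ, 0 ≤ a → a ≤ b → b ≤ 1 → IntervalIntegrable f MeasureTheory.volume a b := by
      intro a b ha hab hb1
      apply ContinuousOn.intervalIntegrable
      apply hf.mono
      rw [Set.uIcc_of_le hab]
      exact Set.Icc_subset_Icc ha hb1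
    have hadj : (∫ t in c..(c+x), f t) + (∫ t in (c+x)..(c + (x + xs.sum)), f t)
        = ∫ t in c..(c + (x + xs.sum)), f t :=
      intervalIntegral.integral_add_adjacent_intervals
        (hint c (c+x) hc (by linarith) (by linarith))
        (hint (c+x) (c + (x + xs.sum)) (by linarith) (by linarith) (by linarith))
    have hhead : |x * f c - ∫ t in c..(c+x), f t| ≤ ε * x := by
      have hconst : (∫ _t in c..(c+x), f c) = x * f c := by
        rw [intervalIntegral.integral_const]
        simp only [smul_eq_mul, add_sub_cancel_left]
      have hsub : (∫ t in c..(c+x), f c) - (∫ t in c..(c+x), f t)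
          = ∫ t in c..(c+x), (f c - f t) :=
        (intervalIntegral.integral_sub (by simp) (hint c (c+x) hc (by linarith) (by linarith))).symm
      have hbound : ‖∫ t in c..(c+x), (f c - f t)‖ ≤ ε * |c + x - c| := by
        apply intervalIntegral.norm_integral_le_of_norm_le_const
        intro t ht
        rw [Set.uIoc_of_le (by linarith)] at ht
        rw [Real.norm_eq_abs]
        have ht1 : c < t := ht.1
        have ht2 : t ≤ c + x := ht.2
        apply Hf c t ⟨hc, by linarith⟩ ⟨by linarith, by linarith⟩
        rw [abs_of_nonpos (by linarith)]
        linarith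
      rw [show x * f c - (∫ t in c..(c+x), f t)
          = (∫ t in c..(c+x), f c) - (∫ t in c..(c+x), f t) from by rw [hconst]]
      rw [hsub]
      calc |∫ t in c..(c+x), (f c - f t)| = ‖∫ t in c..(c+x), (f c - f t)‖ :=
            (Real.norm_eq_abs _).symm
        _ ≤ ε * |c + x - c| := hbound
        _ = ε * x := by rw [show c + x - c = x from by ring, abs_of_nonneg hx0]
    have hrec := ih (c + x) (by linarith) (by linarith) (fun z hz => h2 z (by simp [hz]))
    calc |rsum f (x :: xs) c - ∫ t in c..(c + (x + xs.sum)), f t|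
        = |(x * f c - ∫ t in c..(c+x), f t)
            + (rsum f xs (c + x) - ∫ t in (c+x)..(c + x + xs.sum), f t)| := by
          rw [show rsum f (x :: xs) c = x * f c + rsum f xs (c + x) from rfl, ← hadj,
            show c + (x + xs.sum) = c + x + xs.sum from by ring]
          ring_nf
      _ ≤ _ + _ := abs_add_le _ _
      _ ≤ ε * x + ε * xs.sum := add_le_add hhead (by
          rw [show c + x + xs.sum = (c + x) + xs.sum from by ring]; exact hrec)
      _ = ε * (x :: xs).sum := by rw [hsum]; ring

open Classical in
/-- Number of long intervals (as a real number). -/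
noncomputable def Acnt (L S : ℕ) (β : ℝ) (n : ℕ) : ℝ :=
  ((LSpart L S β n).map (fun x => if x = β ^ n then (1:ℝ) else 0)).sum

open Classical in
/-- Number of short intervals (as a real number). -/
noncomputable def Bcnt (L S : ℕ) (β : ℝ) (n : ℕ) : ℝ :=
  ((LSpart L S β n).map (fun x => if x = β ^ (n+1) then (1:ℝ) else 0)).sum

lemma sum_map_flatMap (l : List ℝ) (g : ℝ → List ℝ) (h : ℝ → ℝ) :
    ((l.flatMap g).map h).sum = (l.map (fun x => ((g x).map h).sum)).sum := by
  induction l with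
  | nil => simp
  | cons a l ih => simp [List.flatMap_cons, ih]

lemma length_eq_AB (L S : ℕ) (β : ℝ) (hβ0 : 0 < β) (hβ1 : β < 1) (n : ℕ) :
    (((LSpart L S β n).length : ℝ)) = Acnt L S β n + Bcnt L S β n := by
  classical
  unfold Acnt Bcnt
  rw [← List.sum_map_add]
  have hne : β ^ (n+1) ≠ β ^ n := ne_of_lt (pow_succ_lt β hβ0 hβ1 n)
  have : (LSpart L S β n).map (fun x => (if x = β ^ n then (1:ℝ) else 0)
      + (if x = β ^ (n+1) then (1:ℝ) else 0)) = (LSpart L S β n).map (fun _ => (1:ℝ)) := by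
    apply List.map_congr_left
    intro x hx
    rcases mem_LSpart L S β hβ0 hβ1 n x hx with h | h
    · rw [if_pos h, if_neg (by rw [h]; exact fun he => hne he.symm)]; norm_num
    · rw [if_pos h, if_neg (by rw [h]; exact hne)]; norm_num
  rw [this]
  simp [List.map_const']

lemma sum_eq_AB (L S : ℕ) (β : ℝ) (hβ0 : 0 < β) (hβ1 : β < 1)
    (hβ : (L : ℝ) * β + (S : ℝ) * β ^ 2 = 1) (n : ℕ) :
    β ^ n * Acnt L S β n + β ^ (n+1) * Bcnt L S β n = 1 := by
  classical
  unfold Acnt Bcnt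
  rw [← List.sum_map_mul_left, ← List.sum_map_mul_left, ← List.sum_map_add]
  have hne : β ^ (n+1) ≠ β ^ n := ne_of_lt (pow_succ_lt β hβ0 hβ1 n)
  have : (LSpart L S β n).map (fun x => β ^ n * (if x = β ^ n then (1:ℝ) else 0)
      + β ^ (n+1) * (if x = β ^ (n+1) then (1:ℝ) else 0)) = (LSpart L S β n).map id := by
    apply List.map_congr_left
    intro x hx
    rcases mem_LSpart L S β hβ0 hβ1 n x hx with h | h
    · rw [if_pos h, if_neg (by rw [h]; exact fun he => hne he.symm), h]; norm_num
    · rw [if_pos h, if_neg (by rw [h]; exact hne), h]; norm_num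
  rw [this, List.map_id, sum_LSpart L S β hβ0 hβ n]

lemma Acnt_succ (L S : ℕ) (β : ℝ) (hβ0 : 0 < β) (hβ1 : β < 1) (n : ℕ) :
    Acnt L S β (n+1) = L * Acnt L S β n + Bcnt L S β n := by
  classical
  unfold Acnt Bcnt
  rw [LSpart_succ, sum_map_flatMap, ← List.sum_map_mul_left, ← List.sum_map_add]
  apply congrArg
  apply List.map_congr_left
  intro x hx
  have hne1 : β ^ (n+2) ≠ β ^ (n+1) := ne_of_lt (pow_succ_lt β hβ0 hβ1 (n+1))
  rcases mem_LSpart L S β hβ0 hβ1 n x hx with h | h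
  · unfold LSstep
    rw [if_pos h, if_pos h, if_neg (by rw [h]; exact fun he => (ne_of_lt (pow_succ_lt β hβ0 hβ1 n)) he.symm)]
    rw [List.map_append, List.map_replicate, List.map_replicate, if_pos rfl, if_neg hne1]
    simp [List.sum_replicate]
  · unfold LSstep
    have hne0 : x ≠ β ^ n := by rw [h]; exact ne_of_lt (pow_succ_lt β hβ0 hβ1 n)
    rw [if_neg hne0, if_neg hne0, if_pos h]
    simp [h]

lemma Bcnt_succ (L S : ℕ) (β : ℝ) (hβ0 : 0 < β) (hβ1 : β < 1) (n : ℕ) :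
    Bcnt L S β (n+1) = S * Acnt L S β n := by
  classical
  unfold Acnt Bcnt
  rw [LSpart_succ, sum_map_flatMap, ← List.sum_map_mul_left]
  apply congrArg
  apply List.map_congr_left
  intro x hx
  have hne1 : β ^ (n+1) ≠ β ^ (n+2) := (ne_of_lt (pow_succ_lt β hβ0 hβ1 (n+1))).symm
  rcases mem_LSpart L S β hβ0 hβ1 n x hx with h | h
  · unfold LSstep
    rw [if_pos h, if_pos h]
    rw [List.map_append, List.map_replicate, List.map_replicate, if_neg hne1, if_pos rfl]
    simp [List.sum_replicate]
  · unfold LSstep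
    have hne0 : x ≠ β ^ n := by rw [h]; exact ne_of_lt (pow_succ_lt β hβ0 hβ1 n)
    rw [if_neg hne0, if_neg hne0]
    have hne2 : x ≠ β ^ (n+2) := by
      rw [h]
      exact (ne_of_lt (pow_succ_lt β hβ0 hβ1 (n+1))).symm
    simp only [if_neg hne2, List.map_cons, List.map_nil, List.sum_cons, List.sum_nil]
    norm_num

lemma Acnt_zero (L S : ℕ) (β : ℝ) : Acnt L S β 0 = 1 := by
  classical
  simp [Acnt, LSpart]

lemma x_closed (L S : ℕ) (β : ℝ) (hβ0 : 0 < β) (hβ1 : β < 1)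
    (hβ : (L : ℝ) * β + (S : ℝ) * β ^ 2 = 1) (n : ℕ) :
    β ^ n * Acnt L S β n = 1/(1 + S*β^2)
      + (-(S*β^2)) ^ n * (1 - 1/(1 + S*β^2)) := by
  have hq0 : (0:ℝ) ≤ S*β^2 := by positivity
  have hq1 : (1:ℝ) + S*β^2 ≠ 0 := by positivity
  induction n with
  | zero => rw [Acnt_zero]; field_simp; ring
  | succ n ih =>
    have hrec : β ^ (n+1) * Acnt L S β (n+1) = 1 - (S*β^2) * (β ^ n * Acnt L S β n) := by
      have h1 := sum_eq_AB L S β hβ0 hβ1 hβ (n+1)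
      have h2 := Bcnt_succ L S β hβ0 hβ1 n
      rw [h2] at h1
      have : β ^ (n+1+1) * ((S:ℝ) * Acnt L S β n) = (S*β^2) * (β ^ n * Acnt L S β n) := by
        ring
      rw [this] at h1
      linarith
    rw [hrec, ih]
    field_simp
    ring

lemma tendsto_u (L S : ℕ) (hL : 0 < L) (β : ℝ) (hβ0 : 0 < β) (hβ1 : β < 1)
    (hβ : (L : ℝ) * β + (S : ℝ) * β ^ 2 = 1) :
    Tendsto (fun n => ((LSpart L S β n).length : ℝ) * β ^ n) atTop
      (nhds ((1 + S*β)/(1 + S*β^2))) := by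
  set q : ℝ := S*β^2 with hqdef
  set xs : ℝ := 1/(1 + q) with hxsdef
  have hq0 : (0:ℝ) ≤ q := by positivity
  have hq1 : q < 1 := by
    have hLβ : (0:ℝ) < L * β := by
      have : (1:ℝ) ≤ L := by exact_mod_cast hL
      nlinarith
    linarith [hβ]
  have hden : (1:ℝ) + q ≠ 0 := by positivity
  have key : ∀ k : ℕ, ((LSpart L S β (k+1)).length : ℝ) * β ^ (k+1)
      = (1 + S*β)*xs + (-q) ^ k * ((1 - xs)*(S*β - q)) := by
    intro k
    rw [length_eq_AB L S β hβ0 hβ1 (k+1)]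
    have hB : Bcnt L S β (k+1) = S * Acnt L S β k := Bcnt_succ L S β hβ0 hβ1 k
    have e1 : (Acnt L S β (k+1) + Bcnt L S β (k+1)) * β ^ (k+1)
        = β ^ (k+1) * Acnt L S β (k+1) + (S*β) * (β ^ k * Acnt L S β k) := by
      rw [hB]; ring
    rw [e1, x_closed L S β hβ0 hβ1 hβ (k+1), x_closed L S β hβ0 hβ1 hβ k]
    rw [show ((-q) ^ (k+1) : ℝ) = (-q) * (-q)^k from by ring]
    rw [← hqdef, ← hxsdef]
    ring
  have hlim : Tendsto (fun k : ℕ => (1 + S*β)*xs + (-q) ^ k * ((1 - xs)*(S*β - q)))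
      atTop (nhds ((1 + S*β)*xs + 0 * ((1 - xs)*(S*β - q)))) := by
    apply Tendsto.add tendsto_const_nhds
    apply Tendsto.mul_const
    apply tendsto_pow_atTop_nhds_zero_of_abs_lt_one
    rw [abs_neg, abs_of_nonneg hq0]; exact hq1
  rw [show ((1 + S*β)*xs + 0 * ((1 - xs)*(S*β - q))) = (1 + S*β)/(1+q) from by
    rw [hxsdef]; ring] at hlim
  rw [← Filter.tendsto_add_atTop_iff_nat 1]
  exact Tendsto.congr (fun k => (key k).symm) hlim

lemma ratio1 (L S : ℕ) (hL : 0 < L) (β : ℝ) (hβ0 : 0 < β) (hβ1 : β < 1)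
    (hβ : (L : ℝ) * β + (S : ℝ) * β ^ 2 = 1) (m : ℕ) :
    Tendsto (fun p => ((LSpart L S β p).length : ℝ) / ((LSpart L S β (m+p)).length : ℝ))
      atTop (nhds (β ^ m)) := by
  set c : ℝ := (1 + S*β)/(1 + S*β^2) with hc
  have hcpos : 0 < c := by positivity
  have hu := tendsto_u L S hL β hβ0 hβ1 hβ
  have hu2 : Tendsto (fun p => ((LSpart L S β (m+p)).length : ℝ) * β ^ (m+p)) atTop (nhds c) := by
    have := (Filter.tendsto_add_atTop_iff_nat m).2 hu
    refine this.congr (fun p => ?_)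
    rw [Nat.add_comm p m]
  have hratio : Tendsto (fun p => β ^ m * ((((LSpart L S β p).length : ℝ) * β ^ p)
      / (((LSpart L S β (m+p)).length : ℝ) * β ^ (m+p)))) atTop (nhds (β ^ m * (c / c))) :=
    Tendsto.const_mul _ (Tendsto.div hu hu2 (ne_of_gt hcpos))
  rw [show β ^ m * (c / c) = β ^ m from by field_simp] at hratio
  refine hratio.congr (fun p => ?_)
  have ht : (0:ℝ) < ((LSpart L S β (m+p)).length : ℝ) := by
    exact_mod_cast length_LSpart_pos L S hL β (m+p)
  have hβp : (0:ℝ) < β ^ p := pow_pos hβ0 p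
  have hβmp : (0:ℝ) < β ^ (m+p) := pow_pos hβ0 (m+p)
  field_simp
  rw [pow_add]
  ring

lemma ratio2 (L S : ℕ) (hL : 0 < L) (β : ℝ) (hβ0 : 0 < β) (hβ1 : β < 1)
    (hβ : (L : ℝ) * β + (S : ℝ) * β ^ 2 = 1) (m : ℕ) :
    Tendsto (fun p => ((LSpart L S β (p-1)).length : ℝ) / ((LSpart L S β (m+p)).length : ℝ))
      atTop (nhds (β ^ (m+1))) := by
  rw [← Filter.tendsto_add_atTop_iff_nat 1]
  refine (ratio1 L S hL β hβ0 hβ1 hβ (m+1)).congr (fun p => ?_)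
  have e1 : p + 1 - 1 = p := by omega
  have e2 : m + (p + 1) = (m + 1) + p := by omega
  rw [e1, e2]


/-- For every continuous function `f` on `[0,1]`,
`(1/tₙ) Σ_{j=1}^{tₙ} f(yⱼⁿ) → ∫₀¹ f(t) dt` as `n → ∞`. -/
theorem LSpart_uniformly_distributed (L S : ℕ) (hL : 0 < L) (hS : 0 < S)
    (β : ℝ) (hβ0 : 0 < β) (hβ1 : β < 1)
    (hβ : (L : ℝ) * β + (S : ℝ) * β ^ 2 = 1) :
    ∀ f : ℝ → ℝ, ContinuousOn f (Set.Icc 0 1) →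
      Tendsto
        (fun n : ℕ => (1 / ((LSpart L S β n).length : ℝ)) *
          ∑ j : Fin (LSpart L S β n).length, f (lep L S β n j))
        atTop (nhds (∫ x in (0 : ℝ)..1, f x)) := by
  intro f hf
  have huc : UniformContinuousOn f (Set.Icc 0 1) :=
    isCompact_Icc.uniformContinuousOn_of_continuous hf
  rw [Metric.tendsto_atTop]
  intro ε hε
  have hε' : 0 < ε / 4 := by linarith
  obtain ⟨δ, hδ0, hδ⟩ := (Metric.uniformContinuousOn_iff).1 huc (ε/4) hε'
  -- choose m with β ^ m < δ
  obtain ⟨m, hm⟩ : ∃ m : ℕ, β ^ m < δ := by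
    have h := tendsto_pow_atTop_nhds_zero_of_abs_lt_one
      (r := β) (by rw [abs_of_nonneg hβ0.le]; exact hβ1)
    obtain ⟨N, hN⟩ := (Metric.tendsto_atTop).1 h δ hδ0
    exact ⟨N, by have := hN N le_rfl; rwa [Real.dist_eq, sub_zero, abs_of_nonneg (by positivity)] at this⟩
  have Hf : ∀ u v : ℝ, u ∈ Set.Icc (0:ℝ) 1 → v ∈ Set.Icc (0:ℝ) 1 → |u - v| ≤ β ^ m →
      |f u - f v| ≤ ε / 4 := by
    intro u v hu hv huv
    have := hδ u hu v hv (by rw [Real.dist_eq]; linarith)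
    rw [Real.dist_eq] at this
    linarith
  -- notation
  set t : ℕ → ℝ := fun n => ((LSpart L S β n).length : ℝ) with htdef
  have htpos : ∀ n, 0 < t n := fun n => by
    show (0:ℝ) < ((LSpart L S β n).length : ℝ)
    exact_mod_cast length_LSpart_pos L S hL β n
  set C1 : ℝ := csumL f (β^m) (LSpart L S β m) 0 with hC1
  set C2 : ℝ := csumS f (β^m) (LSpart L S β m) 0 with hC2
  set R : ℝ := rsum f (LSpart L S β m) 0 with hR
  set I : ℝ := ∫ x in (0:ℝ)..1, f x with hI
  -- (2) |R - I| ≤ ε/4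
  have hRI : |R - I| ≤ ε / 4 := by
    have := rsum_integral f (ε/4) (β^m) hf Hf (LSpart L S β m) 0 le_rfl
      (by rw [zero_add, sum_LSpart L S β hβ0 hβ m])
      (by
        intro x hx
        rcases mem_LSpart L S β hβ0 hβ1 m x hx with h | h
        · exact ⟨by rw [h]; positivity, by rw [h]⟩
        · exact ⟨by rw [h]; positivity, by rw [h]; exact le_of_lt (pow_succ_lt β hβ0 hβ1 m)⟩)
    rw [zero_add, sum_LSpart L S β hβ0 hβ m] at this
    calc |R - I| ≤ (ε/4) * 1 := this
      _ = ε / 4 := by ring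
  -- (3) the weighted sums converge to R
  have hW : Tendsto (fun p => (t p / t (m + p)) * C1 + (t (p-1) / t (m + p)) * C2)
      atTop (nhds R) := by
    have h1 := (ratio1 L S hL β hβ0 hβ1 hβ m).mul_const C1
    have h2 := (ratio2 L S hL β hβ0 hβ1 hβ m).mul_const C2
    have h3 := h1.add h2
    have hRs : β ^ m * C1 + β ^ (m+1) * C2 = R :=
      (rsum_split L S β hβ0 hβ1 m f (LSpart L S β m) 0
        (mem_LSpart L S β hβ0 hβ1 m)).symm
    rwa [hRs] at h3
  obtain ⟨P, hP⟩ := (Metric.tendsto_atTop).1 hW (ε/4) hε'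
  refine ⟨m + P, fun n hn => ?_⟩
  set p := n - m with hp
  have hnp : n = m + p := by omega
  have hpP : p ≥ P := by omega
  -- (1) block estimate at level n
  have hflat : LSpart L S β n = (LSpart L S β m).flatMap (LSg L S β m n) := by
    rw [hnp]; exact selfSim L S β hβ0 hβ1 m p
  have hblocks : |esum f (LSpart L S β n) 0 - wsum f (LSg L S β m n) (LSpart L S β m) 0|
      ≤ (ε/4) * t n := by
    have := blocks f (ε/4) (β^m) (LSg L S β m n) Hf (LSpart L S β m) 0 le_rfl
      (by rw [zero_add, sum_LSpart L S β hβ0 hβ m])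
      (by
        intro x hx
        have hsumg : (LSg L S β m n x).sum = x := by
          unfold LSg
          split_ifs with h
          · rw [show ((fun y => β ^ m * y) : ℝ → ℝ) = fun y => β ^ m * id y from rfl,
              List.sum_map_mul_left, List.map_id, sum_LSpart L S β hβ0 hβ (n - m), h, mul_one]
          · rcases mem_LSpart L S β hβ0 hβ1 m x hx with h' | h'
            · exact absurd h' h
            · rw [show ((fun y => β ^ (m+1) * y) : ℝ → ℝ) = fun y => β ^ (m+1) * id y from rfl,
                List.sum_map_mul_left, List.map_id, sum_LSpart L S β hβ0 hβ (n - m - 1), h', mul_one]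
        have hposg : ∀ y ∈ LSg L S β m n x, 0 ≤ y := by
          intro y hy
          unfold LSg at hy
          split_ifs at hy with h <;>
          · obtain ⟨z, hz, hzy⟩ := List.mem_map.1 hy
            rw [← hzy]
            have := pos_LSpart L S β hβ0 hβ1 _ z hz
            positivity
        rcases mem_LSpart L S β hβ0 hβ1 m x hx with h | h
        · exact ⟨by rw [h]; positivity, by rw [h], hsumg, hposg⟩
        · exact ⟨by rw [h]; positivity, by rw [h]; exact le_of_lt (pow_succ_lt β hβ0 hβ1 m),
            hsumg, hposg⟩)
    rw [← hflat] at this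
    exact this
  -- identify esum with the Fin sum
  have hesum : esum f (LSpart L S β n) 0 = ∑ j : Fin (LSpart L S β n).length, f (lep L S β n j) := by
    rw [esum_eq_sum]
    apply Finset.sum_congr rfl
    intro j _
    rw [zero_add]
    rfl
  -- identify wsum with the ratio expression
  have hwsum : wsum f (LSg L S β m n) (LSpart L S β m) 0 = t p * C1 + t (p-1) * C2 := by
    rw [wsum_split L S β m n f (LSpart L S β m) 0]
  -- assemble
  have htn : t n = t (m + p) := by rw [← hnp]
  have hWn := hP p hpP
  rw [Real.dist_eq] at hWn ⊢
  have e1 : (1 / t n) * (∑ j : Fin (LSpart L S β n).length, f (lep L S β n j))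
      - ((t p / t (m+p)) * C1 + (t (p-1) / t (m+p)) * C2)
      = (1 / t n) * (esum f (LSpart L S β n) 0 - wsum f (LSg L S β m n) (LSpart L S β m) 0) := by
    rw [hesum, hwsum, htn]
    field_simp
  have habs1 : |(1 / t n) * (∑ j : Fin (LSpart L S β n).length, f (lep L S β n j))
      - ((t p / t (m+p)) * C1 + (t (p-1) / t (m+p)) * C2)| ≤ ε/4 := by
    rw [e1, abs_mul, abs_of_nonneg (by positivity : (0:ℝ) ≤ 1 / t n)]
    calc (1 / t n) * |esum f (LSpart L S β n) 0 - wsum f (LSg L S β m n) (LSpart L S β m) 0|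
        ≤ (1 / t n) * ((ε/4) * t n) := by
          apply mul_le_mul_of_nonneg_left hblocks (by positivity)
      _ = ε/4 := by
          have h := (htpos n).ne'
          field_simp
  calc |(1 / t n) * (∑ j : Fin (LSpart L S β n).length, f (lep L S β n j)) - I|
      ≤ |(1 / t n) * (∑ j : Fin (LSpart L S β n).length, f (lep L S β n j))
          - ((t p / t (m+p)) * C1 + (t (p-1) / t (m+p)) * C2)|
        + |((t p / t (m+p)) * C1 + (t (p-1) / t (m+p)) * C2) - R| + |R - I| := by
        have := abs_add_le ((1 / t n) * (∑ j : Fin (LSpart L S β n).length, f (lep L S β n j))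
          - ((t p / t (m+p)) * C1 + (t (p-1) / t (m+p)) * C2))
          (((t p / t (m+p)) * C1 + (t (p-1) / t (m+p)) * C2) - I)
        have h2 := abs_add_le (((t p / t (m+p)) * C1 + (t (p-1) / t (m+p)) * C2) - R) (R - I)
        calc |(1 / t n) * (∑ j : Fin (LSpart L S β n).length, f (lep L S β n j)) - I|
            = |((1 / t n) * (∑ j : Fin (LSpart L S β n).length, f (lep L S β n j))
              - ((t p / t (m+p)) * C1 + (t (p-1) / t (m+p)) * C2))
              + (((t p / t (m+p)) * C1 + (t (p-1) / t (m+p)) * C2) - I)| := by congr 1; ring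
          _ ≤ _ := this
          _ ≤ _ := by
              have h3 : (((t p / t (m+p)) * C1 + (t (p-1) / t (m+p)) * C2) - I)
                  = (((t p / t (m+p)) * C1 + (t (p-1) / t (m+p)) * C2) - R) + (R - I) := by ring
              rw [h3]
              linarith [h2]
    _ < ε/4 + ε/4 + ε/4 := by
        apply add_lt_add_of_lt_of_le
        apply add_lt_add_of_le_of_lt habs1 hWn
        exact hRI
    _ < ε := by linarith
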